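/- Let X be a finite simplicial complex equipped with a piecewise flat metric, let x ∈ X be a point with sys(X,x) finite, and let γ: [0,L] → X be a pointed systolic loop at x parametrized by arclength, where L = sys(X,x). Then: (i) dist(x, γ(t)) = t for all t ∈ [0, L/2] and dist(x, γ(t)) = L − t for all t ∈ [L/2, L] (the loop γ is formed of two distance-minimizing arcs of length L/2 from x to its midpoint); (ii) if γ(s) = γ(t) for some 0 ≤ s < t ≤ L with (s,t) ≠ (0,L), then dist(x, γ(s)) ≤ ½·(sys(X,x) − sys(X)). -/

import Mathlib

open Set MeasureTheory Metric
open scoped ENNReal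

noncomputable section

/-! ### Finite simplicial complexes and their geometric realizations -/

/-- A finite abstract simplicial complex, with vertex set `Fin n`. -/
structure FinComplex where
  /-- number of vertices -/
  n : ℕ
  /-- the faces (simplices) of the complex -/
  faces : Finset (Finset (Fin n))
  not_empty_mem : ∅ ∉ faces
  down_closed : ∀ s ∈ faces, ∀ t ⊆ s, t.Nonempty → t ∈ faces

/-- `K.DimLE d` means that the simplicial complex `K` has dimension at most `d`. -/
def FinComplex.DimLE (K : FinComplex) (d : ℕ) : Prop :=
  ∀ s ∈ K.faces, s.card ≤ d + 1

/-- The geometric realization of a finite simplicial complex, as the set of barycentric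
coordinate functions supported on a face. -/
def FinComplex.space (K : FinComplex) : Type :=
  {w : Fin K.n → ℝ // (∀ i, 0 ≤ w i) ∧ (∑ i, w i) = 1 ∧ ∃ s ∈ K.faces, ∀ i ∉ s, w i = 0}

/-- The canonical (weak = metric, since `K` is finite) topology on the geometric
realization, induced from the product topology on `Fin K.n → ℝ`. -/
def FinComplex.topology (K : FinComplex) : TopologicalSpace K.space :=
  instTopologicalSpaceSubtype

/-- The closed geometric simplex of the realization corresponding to a face `s`. -/
def FinComplex.cell (K : FinComplex) (s : Finset (Fin K.n)) : Set K.space :=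
  {w | ∀ i ∉ s, w.1 i = 0}

/-! ### Lengths of paths, piecewise flat metrics -/

/-- The length of a path in a metric space: its total variation, in `ℝ≥0∞`. -/
def pathELength {X : Type*} [PseudoEMetricSpace X] {x y : X} (γ : Path x y) : ℝ≥0∞ :=
  eVariationOn γ Set.univ

/-- A metric is a length (intrinsic) metric if the distance between two points is the
infimum of the lengths of paths joining them. -/
def IsLengthMetric (X : Type*) [MetricSpace X] : Prop :=
  ∀ x y : X, edist x y = ⨅ γ : Path x y, pathELength γ

/-- A subset `A` of a metric space is a flat `k`-simplex if it is isometric to the convex hull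
of `k` affinely independent points of a Euclidean space. -/
def IsFlatCell {X : Type*} [MetricSpace X] (A : Set X) (N k : ℕ) : Prop :=
  ∃ p : Fin k → EuclideanSpace ℝ (Fin N), AffineIndependent ℝ p ∧
    Nonempty (A ≃ᵢ (convexHull ℝ (Set.range p) : Set (EuclideanSpace ℝ (Fin N))))

/-- A metric space structure on the geometric realization of a finite simplicial complex `K`
is a piecewise flat metric if it induces the canonical topology, is a length metric, and
each closed simplex is isometric to an affine Euclidean simplex. -/
structure IsPiecewiseFlat (K : FinComplex) [m : MetricSpace K.space] : Prop where
  compatible : m.toUniformSpace.toTopologicalSpace = K.topology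
  length_metric : IsLengthMetric K.space
  flat : ∀ s ∈ K.faces, IsFlatCell (K.cell s) K.n s.card

/-! ### Systolic quantities -/

/-- The `d`-dimensional Hausdorff measure of a subset of a metric space. -/
def hmeas {X : Type*} [MetricSpace X] (d : ℝ) (s : Set X) : ℝ≥0∞ :=
  @MeasureTheory.Measure.hausdorffMeasure X _ (borel X) (@BorelSpace.mk X _ (borel X) rfl) d s

/-- The area of a metric space: its `2`-dimensional Hausdorff measure. -/
def eArea (X : Type*) [MetricSpace X] : ℝ≥0∞ := hmeas 2 (Set.univ : Set X)

/-- The area, as a real number. -/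
def areaR (X : Type*) [MetricSpace X] : ℝ := (eArea X).toReal

/-- The pointed systole at `x` : the least (infimal) length of a loop based at `x` which is
not null-homotopic. -/
def psystole (X : Type*) [MetricSpace X] (x : X) : ℝ≥0∞ :=
  ⨅ (γ : Path x x) (_ : ¬ γ.Homotopic (Path.refl x)), pathELength γ

/-- The systole: the least (infimal) length of a noncontractible loop. -/
def systole (X : Type*) [MetricSpace X] : ℝ≥0∞ :=
  ⨅ x : X, psystole X x

/-- The systole, as a real number. -/
def sysR (X : Type*) [MetricSpace X] : ℝ := (systole X).toReal

/-- The pointed systole, as a real number. -/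
def psysR (X : Type*) [MetricSpace X] (x : X) : ℝ := (psystole X x).toReal

/-- The systolic area `area/sys²` of a piecewise flat metric on (the realization of) a
finite simplicial complex, in `ℝ≥0∞`. -/
def complexSysArea (K : FinComplex) [MetricSpace K.space] : ℝ≥0∞ :=
  eArea K.space / (systole K.space) ^ 2

/-! ### Group-theoretic notions -/

/-- A group is finitely presentable if it is isomorphic to the quotient of a finitely
generated free group by the normal closure of finitely many relators. -/
def IsFinitelyPresentable (G : Type*) [Group G] : Prop :=
  ∃ (k : ℕ) (rels : Finset (FreeGroup (Fin k))),
    Nonempty (G ≃* PresentedGroup (rels : Set (FreeGroup (Fin k))))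

/-- A group is unfree if it is not isomorphic to any free group. -/
def IsUnfree (G : Type*) [Group G] : Prop :=
  ∀ S : Type, ¬ Nonempty (G ≃* FreeGroup S)

/-- A group has zero Grushko free index if it does not split as a free product `ℤ * H`. -/
def ZeroGrushkoIndex (G : Type*) [Group G] : Prop :=
  ∀ (H : Type) [Group H], ¬ Nonempty (G ≃* Monoid.Coprod (Multiplicative ℤ) H)

/-- `GrushkoDecomp G p H` means `G ≅ F_p * H` with `F_p` free of rank `p` and `H` of zero
Grushko free index; by Grushko's theorem every finitely generated group has such a
decomposition, `p` being its Grushko free index and `H` its unfree factor. -/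
def GrushkoDecomp (G : Type*) [Group G] (p : ℕ) (H : Type) [Group H] : Prop :=
  ZeroGrushkoIndex H ∧ Nonempty (G ≃* Monoid.Coprod (FreeGroup (Fin p)) H)

/-- `H` is (a representative of) the unfree factor of `G`. -/
def IsUnfreeFactor (H : Type) [Group H] (G : Type*) [Group G] : Prop :=
  ∃ p : ℕ, GrushkoDecomp G p H

/-- `RepresentedBy G K` : the (path-connected, piecewise flat) finite `2`-complex `K` has
fundamental group isomorphic to `G`. -/
def RepresentedBy (G : Type*) [Group G] (K : FinComplex) [MetricSpace K.space] : Prop :=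
  IsPiecewiseFlat K ∧ K.DimLE 2 ∧ PathConnectedSpace K.space ∧
    ∃ x : K.space, Nonempty (G ≃* FundamentalGroup K.space x)

/-- The systolic area `σ(G)` of a group `G`: the infimum of `area/sys²` over all piecewise
flat metrics on finite `2`-complexes with fundamental group isomorphic to `G`
(the reciprocal of the systolic ratio `SR(G)`). -/
def groupSysArea (G : Type*) [Group G] : ℝ≥0∞ :=
  ⨅ (K : FinComplex) (m : MetricSpace K.space) (_ : @RepresentedBy G _ K m),
    @complexSysArea K m

end

noncomputable section

/-- The fundamental group of (the geometric realization of) a finite simplicial complex,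
with respect to its canonical topology. -/
def FinComplex.pi1 (K : FinComplex) (x : K.space) : Type :=
  @FundamentalGroup K.space K.topology x

noncomputable instance (K : FinComplex) (x : K.space) : Group (K.pi1 x) := by
  letI := K.topology
  exact (inferInstance : Group (FundamentalGroup K.space x))

end

/-!
For (i): if `dist x (γ t)` were smaller than the length `L · min t (1 - t)` of the shorter arc
of `γ` from `x` to `γ t`, where `L = sys(X,x)`, a shortcut `r` from `x` to `γ t` would split `γ`
into the loops `γ|[0,t] · r⁻¹` and `r · γ|[t,1]`, both shorter than `L`, hence both
contractible, and `γ` would be contractible. For (ii), a double point `γ s = γ t` splits `γ`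
into the loop `γ|[s,t]` at `γ s` and the loop `γ|[0,s] · γ|[t,1]` at `x`. The latter is
shorter than `L`, hence contractible, so `γ|[s,t]` is not, and `sys(X) ≤ L (t - s)`;
by (i), `s = 1 - t`, which turns this into the bound.
-/

open Set unitInterval

theorem add_eq_one_of_min_one_sub_eq {s t : ℝ} (hst : s < t)
    (h : min s (1 - s) = min t (1 - t)) : s + t = 1 := by
  rcases min_cases s (1 - s) with ⟨hs, _⟩ | ⟨hs, _⟩ <;>
    rcases min_cases t (1 - t) with ⟨ht, _⟩ | ⟨ht, _⟩ <;> linarith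

namespace Path

variable {X : Type*} [TopologicalSpace X] {x y z : X}

def initialSegment (γ : Path x y) (t : I) : Path x (γ t) :=
  (γ.subpath 0 t).cast γ.source.symm rfl

def finalSegment (γ : Path x y) (t : I) : Path (γ t) y :=
  (γ.subpath t 1).cast rfl γ.target.symm

-- `γ.subpath 0 1` runs from `γ 0` to `γ 1`, which are only propositionally `x` and `y`.
theorem homotopic_of_homotopic_subpath_zero_one {γ δ : Path x y}
    (h : (δ.cast γ.source γ.target).Homotopic (γ.subpath 0 1)) : γ.Homotopic δ := by
  rw [subpath_zero_one] at h
  exact (h.pathCast γ.source.symm γ.target.symm).symm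

theorem homotopic_initialSegment_trans_finalSegment (γ : Path x y) (t : I) :
    γ.Homotopic ((γ.initialSegment t).trans (γ.finalSegment t)) :=
  homotopic_of_homotopic_subpath_zero_one ⟨Homotopy.subpathTransSubpath γ 0 t 1⟩

theorem homotopic_initialSegment_trans_subpath_trans_finalSegment (γ : Path x y) (s t : I) :
    γ.Homotopic ((γ.initialSegment s).trans ((γ.subpath s t).trans (γ.finalSegment t))) :=
  homotopic_of_homotopic_subpath_zero_one <|
    (Homotopic.hcomp (Homotopic.refl _) ⟨Homotopy.subpathTransSubpath γ s t 1⟩).trans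
      ⟨Homotopy.subpathTransSubpath γ 0 s 1⟩

theorem homotopic_refl_of_trans_symm {p : Path x y} {q : Path y x} (r : Path x y)
    (hp : (p.trans r.symm).Homotopic (refl x)) (hq : (r.trans q).Homotopic (refl x)) :
    (p.trans q).Homotopic (refl x) := by
  have hcancel : (r.symm.trans (r.trans q)).Homotopic q :=
    (Homotopic.equivalence.symm ⟨Homotopy.transAssoc r.symm r q⟩).trans <|
      (Homotopic.hcomp ⟨(Homotopy.reflSymmTrans r).symm⟩ (Homotopic.refl q)).trans
        ⟨Homotopy.reflTrans q⟩
  have hassoc : ((p.trans r.symm).trans (r.trans q)).Homotopic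
      (p.trans (r.symm.trans (r.trans q))) := ⟨Homotopy.transAssoc _ _ _⟩
  exact ((Homotopic.hcomp (Homotopic.refl p) hcancel).symm.trans hassoc.symm).trans
    ((Homotopic.hcomp hp hq).trans ⟨Homotopy.reflTrans _⟩)

theorem homotopic_trans_trans_of_homotopic_refl (p : Path x y) {β : Path y y} (q : Path y z)
    (hβ : β.Homotopic (refl y)) : (p.trans (β.trans q)).Homotopic (p.trans q) :=
  Homotopic.hcomp (Homotopic.refl p) ((Homotopic.hcomp hβ (Homotopic.refl q)).trans
    ⟨Homotopy.reflTrans q⟩)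

end Path

section Length

variable {Y : Type*} [PseudoEMetricSpace Y] {x y z : Y}

theorem pathELength_symm (p : Path x y) : pathELength p.symm = pathELength p := by
  have h : ⇑p.symm = ⇑p ∘ σ := rfl
  have hσ : AntitoneOn σ univ := fun _ _ _ _ huv => symm_le_symm.2 huv
  rw [pathELength, h, eVariationOn.comp_eq_of_antitoneOn _ σ hσ,
    image_univ_of_surjective symm_bijective.surjective, pathELength]

theorem pathELength_trans_le (p : Path x y) (q : Path y z) :
    pathELength (p.trans q) ≤ pathELength p + pathELength q := by
  let half : I := ⟨1 / 2, by norm_num, by norm_num⟩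
  have hmono (b : ℝ) : Monotone fun t : I => projIcc 0 1 zero_le_one (2 * t - b) :=
    (monotone_projIcc _).comp fun u v huv => by
      have : (u : ℝ) ≤ v := huv
      show 2 * (u : ℝ) - b ≤ 2 * v - b
      linarith
  have hfirst : EqOn (p.trans q) (p ∘ fun t : I => projIcc 0 1 zero_le_one (2 * t - 0))
      (Icc 0 half) := by
    intro t ht
    simp only [sub_zero]
    exact if_pos ht.2
  have hsecond : EqOn (p.trans q) (q ∘ fun t : I => projIcc 0 1 zero_le_one (2 * t - 1))
      (Icc half 1) := by
    intro t ht
    show ite _ _ _ = q.extend _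
    split_ifs with h
    · have : (t : ℝ) = 1 / 2 := le_antisymm h ht.1
      simp [this]
    · rfl
  have hsplit := eVariationOn.Icc_add_Icc (p.trans q) (s := univ) (a := 0) (b := half) (c := 1)
    (by norm_num [half, Subtype.mk_le_mk]) le_one' (mem_univ _)
  rw [univ_inter, univ_inter, univ_inter, eVariationOn.eq_of_eqOn hfirst,
    eVariationOn.eq_of_eqOn hsecond, show Icc (0 : I) 1 = univ from Icc_bot_top] at hsplit
  rw [pathELength, ← hsplit]
  gcongr <;> exact eVariationOn.comp_le_of_monotoneOn _ _ ((hmono _).monotoneOn _) (mapsTo_univ _ _)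

theorem pathELength_subpath (γ : Path x y) {a b : I} (hab : a ≤ b) :
    pathELength (γ.subpath a b) = eVariationOn γ (Icc a b) := by
  have hmono : Monotone (Icc.convexComb a b) := fun u v huv => by
    have : (u : ℝ) ≤ v := huv
    have : (a : ℝ) ≤ b := hab
    show (1 - u) * (a : ℝ) + u * b ≤ (1 - v) * a + v * b
    nlinarith
  rw [pathELength, show ⇑(γ.subpath a b) = γ ∘ Icc.convexComb a b from rfl,
    eVariationOn.comp_eq_of_monotoneOn _ _ (hmono.monotoneOn _), image_univ,
    Path.range_subpathAux, uIcc_of_le hab]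

def Path.HasConstantSpeed (γ : Path x y) (c : ℝ) : Prop :=
  ∀ s t : I, s ≤ t → eVariationOn γ (Icc s t) = ENNReal.ofReal (c * ((t : ℝ) - s))

namespace Path.HasConstantSpeed

variable {γ : Path x y} {c : ℝ} (hγ : γ.HasConstantSpeed c)
include hγ

theorem pathELength_subpath {s t : I} (hst : s ≤ t) :
    pathELength (γ.subpath s t) = ENNReal.ofReal (c * (t - s)) := by
  rw [_root_.pathELength_subpath γ hst, hγ s t hst]

theorem pathELength_initialSegment (t : I) :
    pathELength (γ.initialSegment t) = ENNReal.ofReal (c * t) := by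
  have h := hγ.pathELength_subpath (nonneg' : 0 ≤ t)
  rwa [Icc.coe_zero, sub_zero] at h

theorem pathELength_finalSegment (t : I) :
    pathELength (γ.finalSegment t) = ENNReal.ofReal (c * (1 - t)) :=
  hγ.pathELength_subpath (le_one' : t ≤ 1)

theorem edist_le {s t : I} (hst : s ≤ t) : edist (γ s) (γ t) ≤ ENNReal.ofReal (c * (t - s)) :=
  hγ s t hst ▸ eVariationOn.edist_le _ (left_mem_Icc.2 hst) (right_mem_Icc.2 hst)

end Path.HasConstantSpeed

end Length

section Systole

variable {Y : Type*} [MetricSpace Y] {x y : Y}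

theorem psystole_le_pathELength {γ : Path x x} (h : ¬ γ.Homotopic (Path.refl x)) :
    psystole Y x ≤ pathELength γ :=
  iInf₂_le γ h

theorem systole_le_pathELength {γ : Path x x} (h : ¬ γ.Homotopic (Path.refl x)) :
    systole Y ≤ pathELength γ :=
  (iInf_le _ x).trans (psystole_le_pathELength h)

theorem psystole_le_edist_add_max (hY : IsLengthMetric Y) {p : Path x y} {q : Path y x}
    (h : ¬ (p.trans q).Homotopic (Path.refl x)) :
    psystole Y x ≤ edist x y + max (pathELength p) (pathELength q) := by
  rw [hY x y, ENNReal.iInf_add]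
  refine le_iInf fun r => ?_
  by_cases hp : (p.trans r.symm).Homotopic (Path.refl x)
  · have hq : ¬ (r.trans q).Homotopic (Path.refl x) := fun hq =>
      h (Path.homotopic_refl_of_trans_symm r hp hq)
    calc psystole Y x ≤ pathELength (r.trans q) := psystole_le_pathELength hq
      _ ≤ pathELength r + pathELength q := pathELength_trans_le r q
      _ ≤ _ := by gcongr; exact le_max_right _ _
  · calc psystole Y x ≤ pathELength (p.trans r.symm) := psystole_le_pathELength hp
      _ ≤ pathELength p + pathELength r.symm := pathELength_trans_le _ _
      _ ≤ _ := by rw [pathELength_symm, add_comm]; gcongr; exact le_max_left _ _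

theorem systole_le_or_psystole_le (p : Path x y) (β : Path y y) (q : Path y x)
    (h : ¬ (p.trans (β.trans q)).Homotopic (Path.refl x)) :
    systole Y ≤ pathELength β ∨ psystole Y x ≤ pathELength p + pathELength q := by
  by_cases hβ : β.Homotopic (Path.refl y)
  · refine .inr ((psystole_le_pathELength fun hpq => h ?_).trans (pathELength_trans_le p q))
    exact (Path.homotopic_trans_trans_of_homotopic_refl p q hβ).trans hpq
  · exact .inl (systole_le_pathELength hβ)

variable {γ : Path x x} (hγ : γ.HasConstantSpeed (psysR Y x))
  (hnc : ¬ γ.Homotopic (Path.refl x))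
include hγ hnc

theorem psysR_pos : 0 < psysR Y x := by
  by_contra! h
  have hL : psysR Y x = 0 := le_antisymm h ENNReal.toReal_nonneg
  have hγ_refl : γ = Path.refl x := by
    ext t
    have := hγ.edist_le (nonneg' : 0 ≤ t)
    rwa [hL, zero_mul, ENNReal.ofReal_zero, nonpos_iff_eq_zero, edist_eq_zero, γ.source,
      eq_comm] at this
  exact hnc (hγ_refl ▸ Path.Homotopic.refl _)

theorem psystole_eq_ofReal_psysR : psystole Y x = ENNReal.ofReal (psysR Y x) :=
  (ENNReal.ofReal_toReal (ENNReal.toReal_pos_iff.1 (psysR_pos hγ hnc)).2.ne).symm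

theorem dist_eq_psysR_mul_min (hY : IsLengthMetric Y) (t : I) :
    dist x (γ t) = psysR Y x * min (t : ℝ) (1 - t) := by
  set L := psysR Y x
  have hL := psysR_pos hγ hnc
  have h₁ : dist x (γ t) ≤ L * t := by
    have := hγ.edist_le (nonneg' : 0 ≤ t)
    rwa [γ.source, Icc.coe_zero, sub_zero, edist_le_ofReal (mul_nonneg hL.le t.2.1)] at this
  have h₂ : dist x (γ t) ≤ L * (1 - t) := by
    have := hγ.edist_le (le_one' : t ≤ 1)
    rwa [γ.target, edist_comm, Icc.coe_one, edist_le_ofReal (by nlinarith [t.2.2])] at this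
  have h₃ : L ≤ dist x (γ t) + L * max (t : ℝ) (1 - t) := by
    have := psystole_le_edist_add_max hY
      fun h => hnc ((γ.homotopic_initialSegment_trans_finalSegment t).trans h)
    rwa [hγ.pathELength_initialSegment, hγ.pathELength_finalSegment, ← ENNReal.ofReal_max,
      ← mul_max_of_nonneg _ _ hL.le, edist_dist, ← ENNReal.ofReal_add dist_nonneg
      (by nlinarith [le_max_left (t : ℝ) (1 - t), t.2.1]), psystole_eq_ofReal_psysR hγ hnc,
      ENNReal.ofReal_le_ofReal_iff (add_nonneg dist_nonneg
        (mul_nonneg hL.le ((le_max_left _ _).trans' t.2.1)))] at this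
  have h₄ : L * min (t : ℝ) (1 - t) + L * max (t : ℝ) (1 - t) = L := by
    rw [← mul_add, min_add_max]; ring
  exact le_antisymm (mul_min_of_nonneg _ _ hL.le ▸ le_min h₁ h₂) (by linarith)

theorem systole_le_of_apply_eq {s t : I} (hst : s < t) (h : γ s = γ t) :
    systole Y ≤ ENNReal.ofReal (psysR Y x * (t - s)) := by
  have hL := psysR_pos hγ hnc
  have hst' : (s : ℝ) < t := hst
  rcases systole_le_or_psystole_le (γ.initialSegment s) ((γ.subpath s t).cast rfl h)
      ((γ.finalSegment t).cast h rfl)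
      fun hc => hnc ((γ.homotopic_initialSegment_trans_subpath_trans_finalSegment s t).trans hc)
    with hsys | hpsys
  · exact hsys.trans_eq (hγ.pathELength_subpath hst.le)
  · replace hpsys : psystole Y x ≤
        pathELength (γ.initialSegment s) + pathELength (γ.finalSegment t) := hpsys
    rw [hγ.pathELength_initialSegment, hγ.pathELength_finalSegment,
      psystole_eq_ofReal_psysR hγ hnc, ← ENNReal.ofReal_add (mul_nonneg hL.le s.2.1)
      (by nlinarith [t.2.2]), ENNReal.ofReal_le_ofReal_iff (by nlinarith [t.2.2, s.2.1])]
      at hpsys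
    nlinarith

theorem dist_le_of_apply_eq (hY : IsLengthMetric Y) {s t : I} (hst : s < t) (h : γ s = γ t) :
    dist x (γ s) ≤ (psysR Y x - sysR Y) / 2 := by
  have hL := psysR_pos hγ hnc
  have hst' : (s : ℝ) < t := hst
  have hsum : (s : ℝ) + t = 1 := by
    refine add_eq_one_of_min_one_sub_eq hst (mul_left_cancel₀ hL.ne' ?_)
    rw [← dist_eq_psysR_mul_min hγ hnc hY, ← dist_eq_psysR_mul_min hγ hnc hY, h]
  have hsys : sysR Y ≤ psysR Y x * (t - s) :=
    ENNReal.toReal_le_of_le_ofReal (mul_nonneg hL.le (by linarith))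
      (systole_le_of_apply_eq hγ hnc hst h)
  rw [dist_eq_psysR_mul_min hγ hnc hY, min_eq_left (by linarith)]
  rw [show (t : ℝ) = 1 - s by linarith] at hsys
  linarith

end Systole

theorem pointed_systolic_loop_structure_general
    (K : FinComplex) [MetricSpace K.space] (hflat : IsPiecewiseFlat K)
    (x : K.space)
    (γ : Path x x) (hnc : ¬ γ.Homotopic (Path.refl x))
    (hparam : ∀ s t : unitInterval, s ≤ t →
      eVariationOn (⇑γ) (Set.Icc s t)
        = ENNReal.ofReal (psysR K.space x * ((t : ℝ) - (s : ℝ)))) :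
    (∀ t : unitInterval, (t : ℝ) ≤ 1 / 2 → dist x (γ t) = psysR K.space x * (t : ℝ)) ∧
    (∀ t : unitInterval, 1 / 2 ≤ (t : ℝ) → dist x (γ t) = psysR K.space x * (1 - (t : ℝ))) ∧
    (∀ s t : unitInterval, (s : ℝ) < (t : ℝ) → ¬((s : ℝ) = 0 ∧ (t : ℝ) = 1) →
      γ s = γ t → dist x (γ s) ≤ (psysR K.space x - sysR K.space) / 2) := by
  have hdist := dist_eq_psysR_mul_min hparam hnc hflat.length_metric
  refine ⟨fun t ht => ?_, fun t ht => ?_, fun s t hst _ h => ?_⟩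
  · rw [hdist, min_eq_left (by linarith)]
  · rw [hdist, min_eq_right (by linarith)]
  · exact dist_le_of_apply_eq hparam hnc hflat.length_metric hst h

/-- Structure of a pointed systolic loop `γ` at `x` of length
`L = sys(X,x)`, parametrized (on `[0,1]`, proportionally) by arclength:
(i) `γ` consists of two distance-minimizing arcs of length `L/2`, i.e.
`dist x (γ t) = L·t` for `t ≤ 1/2` and `dist x (γ t) = L·(1−t)` for `t ≥ 1/2`;
(ii) any self-intersection point of `γ` is at distance at most `(sys(X,x) − sys(X))/2`
from `x`. -/
theorem pointed_systolic_loop_structure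
    (K : FinComplex) [MetricSpace K.space] (hflat : IsPiecewiseFlat K)
    (x : K.space) (hfin : psystole K.space x ≠ ⊤)
    (γ : Path x x) (hnc : ¬ γ.Homotopic (Path.refl x))
    (hlen : pathELength γ = psystole K.space x)
    (hparam : ∀ s t : unitInterval, s ≤ t →
      eVariationOn (⇑γ) (Set.Icc s t)
        = ENNReal.ofReal (psysR K.space x * ((t : ℝ) - (s : ℝ)))) :
    (∀ t : unitInterval, (t : ℝ) ≤ 1 / 2 → dist x (γ t) = psysR K.space x * (t : ℝ)) ∧
    (∀ t : unitInterval, 1 / 2 ≤ (t : ℝ) → dist x (γ t) = psysR K.space x * (1 - (t : ℝ))) ∧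
    (∀ s t : unitInterval, (s : ℝ) < (t : ℝ) → ¬((s : ℝ) = 0 ∧ (t : ℝ) = 1) →
      γ s = γ t → dist x (γ s) ≤ (psysR K.space x - sysR K.space) / 2) :=
  pointed_systolic_loop_structure_general K hflat x γ hnc hparam
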